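/- (Golusin's inequality) Let f : 𝔻 → 𝔻 be holomorphic. Then for every z ∈ 𝔻, f^h(z) ≤ ( f^h(0) + 2|z|/(1 + |z|²) ) / ( 1 + f^h(0) · 2|z|/(1 + |z|²) ), where f^h denotes the hyperbolic derivative of f. -/

import Mathlib

open Metric Filter

section GolusinAux

open Complex Set

local notation "conj'" => (starRingEnd ℂ)

lemma mobius_normSq (a w : ℂ) :
    normSq (1 - conj' a * w) - normSq (w - a) = (1 - normSq a) * (1 - normSq w) := by
  simp only [normSq_apply, mul_re, mul_im, sub_re, sub_im, one_re, one_im, conj_re, conj_im]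
  ring

lemma nsq (x : ℂ) : ‖x‖ ^ 2 = normSq x := by rw [Complex.sq_norm]

lemma mobius_denom_ne (a w : ℂ) (ha : ‖a‖ < 1) (hw : ‖w‖ < 1) :
    1 - conj' a * w ≠ 0 := by
  intro h
  have h1 : ‖conj' a * w‖ < 1 := by
    rw [norm_mul, RCLike.norm_conj]
    nlinarith [norm_nonneg a, norm_nonneg w]
  have : (1 : ℂ) = conj' a * w := by linear_combination h
  rw [← this] at h1
  simp at h1

lemma mobius_norm_lt (a w : ℂ) (ha : ‖a‖ < 1) (hw : ‖w‖ < 1) :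
    ‖(w - a) / (1 - conj' a * w)‖ < 1 := by
  have hd := mobius_denom_ne a w ha hw
  rw [norm_div, div_lt_one (norm_pos_iff.mpr hd)]
  have h2 : normSq (w - a) < normSq (1 - conj' a * w) := by
    have := mobius_normSq a w
    have ha' : normSq a < 1 := by rw [← Complex.sq_norm] at *; nlinarith [norm_nonneg a, ha]
    have hw' : normSq w < 1 := by rw [← Complex.sq_norm] at *; nlinarith [norm_nonneg w, hw]
    nlinarith [normSq_nonneg a, normSq_nonneg w]
  have := Complex.sq_norm (w - a)
  have := Complex.sq_norm (1 - conj' a * w)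
  nlinarith [norm_nonneg (w-a), norm_nonneg (1 - conj' a * w)]

lemma mobius_hasDerivAt (a w : ℂ) (hw : 1 - conj' a * w ≠ 0) :
    HasDerivAt (fun ζ => (ζ - a) / (1 - conj' a * ζ))
      ((1 - normSq a) / (1 - conj' a * w) ^ 2) w := by
  have h1 : HasDerivAt (fun ζ : ℂ => ζ - a) 1 w := (hasDerivAt_id w).sub_const a
  have h2 : HasDerivAt (fun ζ : ℂ => 1 - conj' a * ζ) (-(conj' a)) w := by
    simpa using ((hasDerivAt_id w).const_mul (conj' a)).const_sub 1
  have := h1.fun_div h2 hw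
  refine this.congr_deriv ?_
  have : (normSq a : ℂ) = conj' a * a := by rw [← Complex.normSq_eq_conj_mul_self]
  congr 1
  linear_combination this

lemma sq_norm_mobius (a w : ℂ) (hd : 1 - conj' a * w ≠ 0) :
    1 - ‖(w - a) / (1 - conj' a * w)‖ ^ 2 =
      (1 - ‖a‖ ^ 2) * (1 - ‖w‖ ^ 2) / ‖1 - conj' a * w‖ ^ 2 := by
  have h0 : (0:ℝ) < ‖1 - conj' a * w‖ := norm_pos_iff.2 hd
  rw [norm_div, div_pow]
  rw [eq_div_iff (by positivity), sub_mul, div_mul_cancel₀ _ (by positivity)]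
  rw [nsq, nsq, nsq, nsq]
  linear_combination mobius_normSq a w

lemma step2 (a s t A B : ℝ) (hA : 0 < A) (hBA : B ≤ a * A)
    (hid : A ^ 2 - B ^ 2 = (1 - s ^ 2) * (1 - t ^ 2)) (hDB : t - s ≤ B) (hB : 0 ≤ B)
    (hs : 0 ≤ s) (hs1 : s < 1) (ht : 0 ≤ t) (ht1 : t < 1) (ha : 0 ≤ a) :
    t + a * (t * s) ≤ s + a := by
  rcases le_or_gt t s with h | h
  · nlinarith [mul_nonneg ha (by nlinarith : (0:ℝ) ≤ 1 - t * s)]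
  · have hD : 0 < t - s := by linarith
    have hC : 0 < 1 - s * t := by nlinarith
    have key : ((1 - s * t) * B) ^ 2 - ((t - s) * A) ^ 2 =
        ((1 - s * t) ^ 2 - (t - s) ^ 2) * (B ^ 2 - (t - s) ^ 2) := by
      linear_combination (-(t - s) ^ 2) * hid
    have hBD : (t - s) ^ 2 ≤ B ^ 2 := by nlinarith
    have f1 : (0:ℝ) ≤ (1 - s * t) - (t - s) := by
      nlinarith [mul_nonneg (by linarith : (0:ℝ) ≤ 1 - t) (by linarith : (0:ℝ) ≤ 1 + s)]
    have hCD : (t - s) ^ 2 ≤ (1 - s * t) ^ 2 := by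
      nlinarith [mul_nonneg f1 (by linarith : (0:ℝ) ≤ (1 - s * t) + (t - s))]
    have hBaA : B ^ 2 ≤ (a * A) ^ 2 := by nlinarith [mul_nonneg ha hA.le]
    have h1 : ((t - s) * A) ^ 2 ≤ ((1 - s * t) * (a * A)) ^ 2 := by
      nlinarith [key, mul_nonneg (sub_nonneg.2 hCD) (sub_nonneg.2 hBD),
        mul_le_mul_of_nonneg_left hBaA (sq_nonneg (1 - s * t))]
    have h2 : (t - s) * A ≤ (1 - s * t) * (a * A) := by
      have hx : 0 ≤ (t - s) * A := by positivity
      have hy : 0 ≤ (1 - s * t) * (a * A) := by positivity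
      exact (pow_le_pow_iff_left₀ hx hy two_ne_zero).1 h1
    have h3 : t - s ≤ (1 - s * t) * a := by
      have := (mul_le_mul_iff_of_pos_right hA).1 (by linarith [h2] : (t - s) * A ≤ ((1 - s * t) * a) * A)
      linarith
    clear key h1 h2 hBaA hBD hCD f1 hid hBA hDB
    nlinarith [h3]

lemma key_final (a t s F : ℝ) (ha : 0 ≤ a) (ha1 : a < 1) (ht : 0 ≤ t) (ht1 : t ≤ 1)
    (hs : 0 ≤ s) (hs1 : s ≤ 1) (hts : t + a * (t * s) ≤ s + a)
    (hF : F ≤ (a + t) / (1 + a * t)) :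
    F ≤ (s + 2 * a / (1 + a ^ 2)) / (1 + s * (2 * a / (1 + a ^ 2))) := by
  apply hF.trans
  have hd1 : (0:ℝ) < 1 + a * t := by positivity
  have hd2 : (0:ℝ) < 1 + a ^ 2 := by positivity
  have hrhs : (s + 2 * a / (1 + a ^ 2)) / (1 + s * (2 * a / (1 + a ^ 2)))
      = (s * (1 + a ^ 2) + 2 * a) / (1 + a ^ 2 + 2 * a * s) := by
    rw [div_eq_div_iff (by positivity) (by positivity)]
    field_simp
  rw [hrhs, div_le_div_iff₀ hd1 (by positivity)]
  nlinarith [mul_nonneg (by nlinarith : (0:ℝ) ≤ 1 - a ^ 2) (by linarith : (0:ℝ) ≤ s + a - t - a * (t * s))]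

end GolusinAux

/-- The hyperbolic derivative `f^h(z) = (1 − |z|²)|f'(z)|/(1 − |f(z)|²)`. -/
noncomputable def hDeriv (f : ℂ → ℂ) (z : ℂ) : ℝ :=
  (1 - ‖z‖ ^ 2) * ‖deriv f z‖ / (1 - ‖f z‖ ^ 2)

set_option maxHeartbeats 2000000 in
/-- **Golusin's inequality.** For every holomorphic self-map `f` of the open unit
disk and every `z` in the disk,
`f^h(z) ≤ (f^h(0) + 2|z|/(1 + |z|²)) / (1 + f^h(0) · 2|z|/(1 + |z|²))`. -/
theorem golusin_inequality (f : ℂ → ℂ)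
    (hf_diff : ∀ z ∈ Metric.ball (0 : ℂ) 1, DifferentiableAt ℂ f z)
    (hf_maps : ∀ z ∈ Metric.ball (0 : ℂ) 1, ‖f z‖ < 1) :
    ∀ z ∈ Metric.ball (0 : ℂ) 1,
      hDeriv f z ≤ (hDeriv f 0 + 2 * ‖z‖ / (1 + ‖z‖ ^ 2)) /
        (1 + hDeriv f 0 * (2 * ‖z‖ / (1 + ‖z‖ ^ 2))) := by
  intro z hz
  have hz1 : ‖z‖ < 1 := mem_ball_zero_iff.1 hz
  have h0mem : (0:ℂ) ∈ Metric.ball (0:ℂ) 1 := mem_ball_self one_pos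
  set b := f 0 with hb_def
  have hb : ‖b‖ < 1 := hf_maps 0 h0mem
  have hb2 : (0:ℝ) < 1 - ‖b‖ ^ 2 := by nlinarith [norm_nonneg b]
  set g : ℂ → ℂ := fun w => (f w - b) / (1 - (starRingEnd ℂ) b * f w) with hg_def
  have hden : ∀ w ∈ Metric.ball (0:ℂ) 1, 1 - (starRingEnd ℂ) b * f w ≠ 0 :=
    fun w hw => mobius_denom_ne b (f w) hb (hf_maps w hw)
  have hgder : ∀ w ∈ Metric.ball (0:ℂ) 1, HasDerivAt g
      ((1 - Complex.normSq b) / (1 - (starRingEnd ℂ) b * f w) ^ 2 * deriv f w) w := by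
    intro w hw
    have h1 := mobius_hasDerivAt b (f w) (hden w hw)
    have h2 := (hf_diff w hw).hasDerivAt
    exact h1.comp w h2
  have hg_diff : DifferentiableOn ℂ g (Metric.ball 0 1) :=
    fun w hw => ((hgder w hw).differentiableAt).differentiableWithinAt
  have hg_maps : Set.MapsTo g (Metric.ball 0 1) (Metric.ball 0 1) := fun w hw =>
    mem_ball_zero_iff.2 (mobius_norm_lt b (f w) hb (hf_maps w hw))
  have hg0 : g 0 = 0 := by simp [hg_def, ← hb_def]
  set h : ℂ → ℂ := dslope g 0 with hh_def
  have hh_diff : DifferentiableOn ℂ h (Metric.ball 0 1) :=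
    (Complex.differentiableOn_dslope (ball_mem_nhds _ one_pos)).mpr hg_diff
  have hh_le : ∀ w ∈ Metric.ball (0:ℂ) 1, ‖h w‖ ≤ 1 := by
    intro w hw
    have := Complex.norm_dslope_le_div_of_mapsTo_ball hg_diff (by rw [hg0]; exact hg_maps.mono_right ball_subset_closedBall) hw
    simpa using this
  have hgh : ∀ w : ℂ, g w = w * h w := by
    intro w
    rcases eq_or_ne w 0 with rfl | hw
    · simp [hg0]
    · rw [hh_def, dslope_of_ne _ hw, slope_def_field, hg0]
      field_simp
      ring
  have hh0 : h 0 = deriv g 0 := dslope_same g 0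
  -- the value of `hDeriv f 0`
  have hnb : (1:ℂ) - (Complex.normSq b : ℂ) = ((1 - ‖b‖ ^ 2 : ℝ) : ℂ) := by
    rw [show ((Complex.normSq b : ℂ)) = ((‖b‖ ^ 2 : ℝ) : ℂ) by exact_mod_cast (nsq b).symm]
    push_cast
    ring
  have hcb : (1 : ℂ) - (starRingEnd ℂ) b * b = ((1 - ‖b‖ ^ 2 : ℝ) : ℂ) := by
    rw [mul_comm, Complex.mul_conj]
    exact hnb
  have hne : ((1 - ‖b‖ ^ 2 : ℝ) : ℂ) ≠ 0 := by exact_mod_cast hb2.ne'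
  have hdivaux : ∀ (c d : ℂ), c ≠ 0 → (c / c ^ 2) * d = d / c := by
    intro c d hc; field_simp
  have e0 : deriv g 0 = deriv f 0 / ((1 - ‖b‖ ^ 2 : ℝ) : ℂ) := by
    rw [(hgder 0 h0mem).deriv, ← hb_def, hcb, hnb]
    exact hdivaux _ _ hne
  have hs_eq : hDeriv f 0 = ‖h 0‖ := by
    rw [hh0, e0, norm_div, Complex.norm_real, Real.norm_eq_abs, abs_of_pos hb2, hDeriv]
    simp [← hb_def]
  -- invariance of the hyperbolic derivative
  have hNz : 1 - (starRingEnd ℂ) b * f z ≠ 0 := hden z hz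
  have hN : (0:ℝ) < ‖1 - (starRingEnd ℂ) b * f z‖ := norm_pos_iff.2 hNz
  have hfz2 : (0:ℝ) < 1 - ‖f z‖ ^ 2 := by nlinarith [norm_nonneg (f z), hf_maps z hz]
  have hinv : hDeriv f z = (1 - ‖z‖ ^ 2) * ‖deriv g z‖ / (1 - ‖g z‖ ^ 2) := by
    have h1 : ‖deriv g z‖ = (1 - ‖b‖ ^ 2) / ‖1 - (starRingEnd ℂ) b * f z‖ ^ 2 * ‖deriv f z‖ := by
      rw [(hgder z hz).deriv, norm_mul, norm_div, norm_pow]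
      congr 2
      rw [hnb, Complex.norm_real, Real.norm_eq_abs, abs_of_pos hb2]
    have h2 : 1 - ‖g z‖ ^ 2 =
        (1 - ‖b‖ ^ 2) * (1 - ‖f z‖ ^ 2) / ‖1 - (starRingEnd ℂ) b * f z‖ ^ 2 := by
      rw [hg_def]
      exact sq_norm_mobius b (f z) hNz
    rw [hDeriv, h1, h2]
    rw [div_eq_div_iff (by positivity) (by positivity)]
    field_simp
  have hgz2 : ‖g z‖ ^ 2 = ‖z‖ ^ 2 * ‖h z‖ ^ 2 := by
    rw [hgh z, norm_mul]; ring
  have hhz_diff : DifferentiableAt ℂ h z := hh_diff.differentiableAt (isOpen_ball.mem_nhds hz)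
  have hdgz : deriv g z = h z + z * deriv h z := by
    have hfun : g = fun w => w * h w := funext hgh
    have hd : HasDerivAt (fun w => w * h w) (1 * h z + z * deriv h z) z :=
      (hasDerivAt_id z).mul hhz_diff.hasDerivAt
    rw [hfun, hd.deriv]; ring
  -- the two Schwarz–Pick estimates for h
  have hmain : (1 - ‖z‖ ^ 2) * ‖deriv h z‖ ≤ 1 - ‖h z‖ ^ 2 ∧
      ‖h z‖ + ‖z‖ * (‖h z‖ * ‖h 0‖) ≤ ‖h 0‖ + ‖z‖ := by
    by_cases hcase : ∀ w ∈ Metric.ball (0:ℂ) 1, ‖h w‖ < 1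
    · have htlt : ‖h z‖ < 1 := hcase z hz
      have hslt : ‖h 0‖ < 1 := hcase 0 h0mem
      constructor
      · -- derivative estimate via Schwarz at the centre
        set φ : ℂ → ℂ := fun ζ => (ζ - (-z)) / (1 - (starRingEnd ℂ) (-z) * ζ) with hφ_def
        set ψ : ℂ → ℂ := fun w => (w - h z) / (1 - (starRingEnd ℂ) (h z) * w) with hψ_def
        have hφ0 : φ 0 = z := by simp [hφ_def]
        have hznorm : ‖(-z : ℂ)‖ < 1 := by simpa using hz1
        have hφ_maps : ∀ ζ ∈ Metric.ball (0:ℂ) 1, ‖φ ζ‖ < 1 := fun ζ hζ =>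
          mobius_norm_lt (-z) ζ hznorm (mem_ball_zero_iff.1 hζ)
        set u : ℂ → ℂ := fun ζ => ψ (h (φ ζ)) with hu_def
        have hu0 : u 0 = 0 := by simp [hu_def, hφ0, hψ_def]
        have hu_diff : DifferentiableOn ℂ u (Metric.ball 0 1) := by
          intro ζ hζ
          have hζ1 : ‖ζ‖ < 1 := mem_ball_zero_iff.1 hζ
          have hφd : DifferentiableAt ℂ φ ζ :=
            (mobius_hasDerivAt (-z) ζ (mobius_denom_ne (-z) ζ hznorm hζ1)).differentiableAt
          have hφζ : φ ζ ∈ Metric.ball (0:ℂ) 1 := mem_ball_zero_iff.2 (hφ_maps ζ hζ)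
          have hhd : DifferentiableAt ℂ h (φ ζ) := hh_diff.differentiableAt
            (isOpen_ball.mem_nhds hφζ)
          have hψd : DifferentiableAt ℂ ψ (h (φ ζ)) :=
            (mobius_hasDerivAt (h z) (h (φ ζ))
              (mobius_denom_ne (h z) (h (φ ζ)) htlt (hcase _ hφζ))).differentiableAt
          exact ((hψd.comp _ hhd).comp ζ hφd).differentiableWithinAt
        have hu_maps : Set.MapsTo u (Metric.ball 0 1) (Metric.ball 0 1) := by
          intro ζ hζ
          have hφζ : φ ζ ∈ Metric.ball (0:ℂ) 1 := mem_ball_zero_iff.2 (hφ_maps ζ hζ)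
          exact mem_ball_zero_iff.2
            (mobius_norm_lt (h z) (h (φ ζ)) htlt (hcase _ hφζ))
        have hub : ‖deriv u 0‖ ≤ 1 := by
          have := Complex.norm_deriv_le_one_of_mapsTo_ball hu_diff
            (by rw [hu0]; exact hu_maps.mono_right ball_subset_closedBall) one_pos
          simpa using this
        -- compute deriv u 0
        have hφd0 : HasDerivAt φ ((1 - Complex.normSq (-z)) / (1 - (starRingEnd ℂ) (-z) * 0) ^ 2) 0 :=
          mobius_hasDerivAt (-z) 0 (by simp)
        have hψdz : HasDerivAt ψ
            ((1 - Complex.normSq (h z)) / (1 - (starRingEnd ℂ) (h z) * h z) ^ 2) (h z) :=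
          mobius_hasDerivAt (h z) (h z) (mobius_denom_ne (h z) (h z) htlt htlt)
        have hhz' : HasDerivAt h (deriv h z) (φ 0) := hφ0 ▸ hhz_diff.hasDerivAt
        have hψdz' : HasDerivAt ψ
            ((1 - Complex.normSq (h z)) / (1 - (starRingEnd ℂ) (h z) * h z) ^ 2) (h (φ 0)) := by
          rw [hφ0]; exact hψdz
        have hud : HasDerivAt u
            (((1 - Complex.normSq (h z)) / (1 - (starRingEnd ℂ) (h z) * h z) ^ 2) *
              (deriv h z * ((1 - Complex.normSq (-z)) / (1 - (starRingEnd ℂ) (-z) * 0) ^ 2))) 0 :=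
          (hψdz'.comp 0 (hhz'.comp 0 hφd0) : HasDerivAt (ψ ∘ h ∘ φ) _ 0)
        have ht2 : (0:ℝ) < 1 - ‖h z‖ ^ 2 := by nlinarith [norm_nonneg (h z)]
        have htne : ((1 - ‖h z‖ ^ 2 : ℝ) : ℂ) ≠ 0 := by exact_mod_cast ht2.ne'
        have hcz : (1 : ℂ) - (starRingEnd ℂ) (h z) * h z = ((1 - ‖h z‖ ^ 2 : ℝ) : ℂ) := by
          rw [mul_comm, Complex.mul_conj]
          rw [show ((Complex.normSq (h z) : ℂ)) = ((‖h z‖ ^ 2 : ℝ) : ℂ) by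
            exact_mod_cast (nsq (h z)).symm]
          push_cast; ring
        have hval : deriv u 0 = deriv h z * ((1 - ‖z‖ ^ 2 : ℝ) : ℂ) / ((1 - ‖h z‖ ^ 2 : ℝ) : ℂ) := by
          rw [hud.deriv, hcz]
          rw [show (1:ℂ) - ((Complex.normSq (h z) : ℂ)) = ((1 - ‖h z‖ ^ 2 : ℝ) : ℂ) by
            rw [show ((Complex.normSq (h z) : ℂ)) = ((‖h z‖ ^ 2 : ℝ) : ℂ) by
              exact_mod_cast (nsq (h z)).symm]
            push_cast; ring]
          rw [show (1:ℂ) - ((Complex.normSq (-z) : ℂ)) = ((1 - ‖z‖ ^ 2 : ℝ) : ℂ) by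
            rw [Complex.normSq_neg, show ((Complex.normSq z : ℂ)) = ((‖z‖ ^ 2 : ℝ) : ℂ) by
              exact_mod_cast (nsq z).symm]
            push_cast; ring]
          rw [show (1:ℂ) - (starRingEnd ℂ) (-z) * 0 = 1 by ring, one_pow, div_one]
          exact hdivaux _ _ htne
        have hnorm : ‖deriv u 0‖ = ‖deriv h z‖ * (1 - ‖z‖ ^ 2) / (1 - ‖h z‖ ^ 2) := by
          rw [hval, norm_div, norm_mul, Complex.norm_real, Complex.norm_real,
            Real.norm_eq_abs, Real.norm_eq_abs, abs_of_pos (by nlinarith [norm_nonneg z] : (0:ℝ) < 1 - ‖z‖ ^ 2),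
            abs_of_pos ht2]
        rw [hnorm, div_le_one ht2] at hub
        linarith [hub]
      · -- distance estimate
        set q : ℂ := h 0 with hq_def
        set k : ℂ → ℂ := fun w => (h w - q) / (1 - (starRingEnd ℂ) q * h w) with hk_def
        have hk_diff : DifferentiableOn ℂ k (Metric.ball 0 1) := by
          intro w hw
          have hd := mobius_denom_ne q (h w) hslt (hcase w hw)
          have h1 : DifferentiableAt ℂ h w := hh_diff.differentiableAt (isOpen_ball.mem_nhds hw)
          exact ((h1.sub_const q).div
            (((h1.const_mul ((starRingEnd ℂ) q)).const_sub 1)) hd).differentiableWithinAt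
        have hk_maps : Set.MapsTo k (Metric.ball 0 1) (Metric.ball 0 1) := fun w hw =>
          mem_ball_zero_iff.2 (mobius_norm_lt q (h w) hslt (hcase w hw))
        have hk0 : k 0 = 0 := by simp [hk_def, hq_def]
        have hkz : ‖k z‖ ≤ ‖z‖ := by
          have := Complex.norm_le_norm_of_mapsTo_ball hk_diff
            (hk_maps.mono_right ball_subset_closedBall) hk0 hz1
          simpa using this
        have hA : (0:ℝ) < ‖1 - (starRingEnd ℂ) q * h z‖ := by
          have h1 : ‖(starRingEnd ℂ) q * h z‖ < 1 := by
            rw [norm_mul, RCLike.norm_conj]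
            nlinarith [norm_nonneg q, norm_nonneg (h z)]
          have h2 := norm_sub_norm_le (1:ℂ) ((starRingEnd ℂ) q * h z)
          simp only [norm_one] at h2
          linarith
        have hBA : ‖h z - q‖ ≤ ‖z‖ * ‖1 - (starRingEnd ℂ) q * h z‖ := by
          have hk_eq : ‖k z‖ = ‖h z - q‖ / ‖1 - (starRingEnd ℂ) q * h z‖ := by
            rw [hk_def]; exact norm_div _ _
          rw [hk_eq, div_le_iff₀ hA] at hkz
          linarith [hkz]
        have hid : ‖1 - (starRingEnd ℂ) q * h z‖ ^ 2 - ‖h z - q‖ ^ 2 =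
            (1 - ‖q‖ ^ 2) * (1 - ‖h z‖ ^ 2) := by
          rw [nsq, nsq, nsq, nsq]
          exact mobius_normSq q (h z)
        exact step2 ‖z‖ ‖q‖ ‖h z‖ _ _ hA hBA hid
          (by linarith [norm_sub_norm_le (h z) q]) (norm_nonneg _)
          (norm_nonneg q) hslt (norm_nonneg (h z)) htlt (norm_nonneg z)
    · -- case: h attains modulus 1, hence constant
      push_neg at hcase
      obtain ⟨w₀, hw₀, hge⟩ := hcase
      have hmax : IsMaxOn (norm ∘ h) (Metric.ball 0 1) w₀ := fun w hw => by
        simpa using (hh_le w hw).trans hge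
      have heq := Complex.eqOn_of_isPreconnected_of_isMaxOn_norm
        (convex_ball (0:ℂ) 1).isPreconnected isOpen_ball hh_diff hw₀ hmax
      have h1 : ‖h w₀‖ = 1 := le_antisymm (hh_le w₀ hw₀) hge
      have hz_eq : h z = h w₀ := heq hz
      have h0_eq : h 0 = h w₀ := heq h0mem
      have hder0 : deriv h z = 0 := by
        have hev : h =ᶠ[nhds z] fun _ => h w₀ :=
          Filter.eventuallyEq_of_mem (isOpen_ball.mem_nhds hz) (fun w hw => heq hw)
        rw [hev.deriv_eq, deriv_const]
      constructor
      · rw [hder0, hz_eq, h1]; simp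
      · rw [hz_eq, h0_eq, h1]
        have := norm_nonneg z
        nlinarith
  obtain ⟨hI, hII⟩ := hmain
  -- endgame
  have ht1 : ‖h z‖ ≤ 1 := hh_le z hz
  have hs1 : ‖h 0‖ ≤ 1 := hh_le 0 h0mem
  have hden2 : (0:ℝ) < 1 - ‖z‖ ^ 2 * ‖h z‖ ^ 2 := by
    have h1 : ‖z‖ ^ 2 < 1 := by nlinarith [norm_nonneg z]
    have h2 : ‖h z‖ ^ 2 ≤ 1 := by nlinarith [norm_nonneg (h z)]
    nlinarith [mul_le_mul_of_nonneg_left h2 (sq_nonneg ‖z‖)]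
  have hstep : hDeriv f z ≤ (‖z‖ + ‖h z‖) / (1 + ‖z‖ * ‖h z‖) := by
    rw [hinv, hgz2]
    rw [div_le_div_iff₀ hden2 (by positivity)]
    have hX : ‖deriv g z‖ ≤ ‖h z‖ + ‖z‖ * ‖deriv h z‖ := by
      rw [hdgz]
      calc ‖h z + z * deriv h z‖ ≤ ‖h z‖ + ‖z * deriv h z‖ := norm_add_le _ _
        _ = ‖h z‖ + ‖z‖ * ‖deriv h z‖ := by rw [norm_mul]
    have e1 : (1 - ‖z‖ ^ 2) * ‖deriv g z‖ ≤ (‖z‖ + ‖h z‖) * (1 - ‖z‖ * ‖h z‖) := by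
      nlinarith [mul_le_mul_of_nonneg_left hX
          (show (0:ℝ) ≤ 1 - ‖z‖ ^ 2 by nlinarith [norm_nonneg z]),
        mul_le_mul_of_nonneg_left hI (norm_nonneg z)]
    nlinarith [mul_le_mul_of_nonneg_right e1
      (show (0:ℝ) ≤ 1 + ‖z‖ * ‖h z‖ by positivity)]
  rw [hs_eq]
  exact key_final ‖z‖ ‖h z‖ ‖h 0‖ (hDeriv f z) (norm_nonneg z) hz1 (norm_nonneg (h z)) ht1
    (norm_nonneg (h 0)) hs1 hII hstep
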